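/- arXiv:1002.1933 — 5 statements merged into one kernel-verified Lean document; each statement's English description precedes it below -/
import Mathlib

section
/- The only affine permutation in S̃_n that avoids the pattern 132 is the identity. -/
/-!
A descent `ω i > ω j` with `i < j` can be pushed to the left by a multiple of the period:
for `M` large, `i - M n < i < j` with `ω (i - M n) = ω i - M n < ω j < ω i` is a 132-pattern.
So a 132-avoiding affine permutation is strictly increasing, and a strictly increasing `ω`
with `ω (i + n) = ω i + n` must raise every step by exactly one, i.e. `ω i = i + c`.
The sum normalisation then gives `c = 0`.
-/

theorem Int.sum_Icc_one_id (n : ℕ) :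
    ∑ i ∈ Finset.Icc (1 : ℤ) n, i = ((n + 1).choose 2 : ℤ) := by
  induction n with
  | zero => simp
  | succ n ih =>
    rw [Nat.cast_succ, ← Order.succ_eq_add_one, ← Finset.insert_Icc_right_eq_Icc_succ (by simp),
      Finset.sum_insert (by simp), ih, Nat.choose_succ_succ' (n + 1), Nat.choose_one_right]
    push_cast [Order.succ_eq_add_one]
    ring

theorem StrictMono.add_sub_le {f : ℤ → ℤ} (hf : StrictMono f) {i j : ℤ} (hij : i ≤ j) :
    f i + (j - i) ≤ f j := by
  induction j, hij using Int.leInduction with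
  | base => simp
  | succ j _ ih => have := hf (lt_add_one j); omega

theorem StrictMono.eq_add_apply_zero {f : ℤ → ℤ} (hf : StrictMono f) {n : ℤ} (hn : 0 < n)
    (hshift : ∀ i, f (i + n) = f i + n) (i : ℤ) : f i = i + f 0 := by
  have hstep : ∀ i, f (i + 1) = f i + 1 := fun i => by
    have h₁ := hf.add_sub_le (by omega : i ≤ i + 1)
    have h₂ := hf.add_sub_le (by omega : i + 1 ≤ i + n)
    have := hshift i
    omega
  induction i using Int.induction_on with
  | zero => simp
  | succ k ih => rw [hstep, ih]; ring
  | pred k ih => have := hstep (-k - 1); simp only [sub_add_cancel] at this; omega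

theorem strictMono_of_not_exists_132 {f : ℤ → ℤ} (hf : Function.Injective f) {n : ℤ}
    (hn : 0 < n) (hshift : ∀ i, f (i + n) = f i + n)
    (havoid : ¬ ∃ i₁ i₂ i₃ : ℤ, i₁ < i₂ ∧ i₂ < i₃ ∧ f i₁ < f i₃ ∧ f i₃ < f i₂) :
    StrictMono f := by
  intro i j hij
  by_contra! hle
  have hlt : f j < f i := lt_of_le_of_ne hle (hf.ne hij.ne')
  have hper : Function.Periodic (fun i => f i - i) n := fun i => by simp only [hshift]; ring
  set M := f i - f j + 1
  have hdown : f (i - M * n) = f i - M * n := by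
    have := hper.sub_int_mul_eq (x := i) M
    simp only [Int.cast_id] at this
    linarith
  refine havoid ⟨i - M * n, i, j, ?_, hij, ?_, hlt⟩ <;> nlinarith

theorem avoids_132_iff_id (n : ℕ) (hn : 2 ≤ n) (ω : ℤ → ℤ)
    (hbij : Function.Bijective ω)
    (hshift : ∀ i : ℤ, ω (i + n) = ω i + n)
    (hsum : ∑ i ∈ Finset.Icc (1 : ℤ) (n : ℤ), ω i = ((n + 1).choose 2 : ℤ)) :
    (¬ ∃ i₁ i₂ i₃ : ℤ, i₁ < i₂ ∧ i₂ < i₃ ∧ ω i₁ < ω i₃ ∧ ω i₃ < ω i₂) ↔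
      (∀ i : ℤ, ω i = i) := by
  have hn₀ : (0 : ℤ) < n := by omega
  constructor
  · intro havoid
    have hmono := strictMono_of_not_exists_132 hbij.injective hn₀ hshift havoid
    have htrans := hmono.eq_add_apply_zero hn₀ hshift
    have hω₀ : ω 0 = 0 := by
      rw [Finset.sum_congr rfl fun i _ => htrans i] at hsum
      simp only [Finset.sum_add_distrib, Int.sum_Icc_one_id, Finset.sum_const, Int.card_Icc,
        add_sub_cancel_right, Int.toNat_natCast, nsmul_eq_mul, add_eq_left] at hsum
      exact (mul_eq_zero.mp hsum).resolve_left hn₀.ne'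
    intro i
    rw [htrans, hω₀, add_zero]
  · rintro hid ⟨i₁, i₂, i₃, h₁₂, h₂₃, h₁₃, h₃₂⟩
    simp only [hid] at h₁₃ h₃₂
    omega
end

section
/- If ω ∈ S̃_n contains the pattern 231, then ω contains the pattern 1342. -/
/-!
Given a 231 occurrence at positions `a < b < c`, the relation `ω (i + n) = ω i + n` lets us
shift any position far enough to the left to get `i < a` with `ω i < ω c`; then `i, a, b, c`
is an occurrence of 1342.
-/

theorem periodic_sub_id_of_map_add {ω : ℤ → ℤ} {n : ℤ} (hshift : ∀ i, ω (i + n) = ω i + n) :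
    Function.Periodic (fun i => ω i - i) n := fun i => by
  simp only [hshift]
  ring

theorem exists_lt_map_lt_of_map_add {ω : ℤ → ℤ} {n : ℤ} (hn : 0 < n)
    (hshift : ∀ i, ω (i + n) = ω i + n) (p v : ℤ) : ∃ i < p, ω i < v := by
  set k := |p| + |v - ω 0| + 1 with hk_def
  have hk : k ≤ k * n := le_mul_of_one_le_right (by positivity) hn
  have hωk : ω (-k * n) = ω 0 - k * n := by
    have := (periodic_sub_id_of_map_add hshift).int_mul_eq (-k)
    simp only [Int.cast_id, sub_zero] at this
    linarith
  refine ⟨-k * n, ?_, ?_⟩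
  · linarith [neg_abs_le p, abs_nonneg (v - ω 0)]
  · linarith [neg_abs_le (v - ω 0), abs_nonneg p]

theorem contains_231_imp_contains_1342_general (n : ℕ) (hn : 2 ≤ n) (ω : ℤ → ℤ)
    (hshift : ∀ i : ℤ, ω (i + n) = ω i + n)
    (h231 : ∃ i₁ i₂ i₃ : ℤ, i₁ < i₂ ∧ i₂ < i₃ ∧ ω i₃ < ω i₁ ∧ ω i₁ < ω i₂) :
    ∃ i₁ i₂ i₃ i₄ : ℤ, i₁ < i₂ ∧ i₂ < i₃ ∧ i₃ < i₄ ∧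
      ω i₁ < ω i₄ ∧ ω i₄ < ω i₂ ∧ ω i₂ < ω i₃ := by
  obtain ⟨a, b, c, hab, hbc, hc_lt_a, ha_lt_b⟩ := h231
  obtain ⟨i, hia, hic⟩ := exists_lt_map_lt_of_map_add (by omega) hshift a (ω c)
  exact ⟨i, a, b, c, hia, hab, hbc, hic, hc_lt_a, ha_lt_b⟩

theorem contains_231_imp_contains_1342 (n : ℕ) (hn : 2 ≤ n) (ω : ℤ → ℤ)
    (hbij : Function.Bijective ω)
    (hshift : ∀ i : ℤ, ω (i + n) = ω i + n)
    (hsum : ∑ i ∈ Finset.Icc (1 : ℤ) (n : ℤ), ω i = ((n + 1).choose 2 : ℤ))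
    (h231 : ∃ i₁ i₂ i₃ : ℤ, i₁ < i₂ ∧ i₂ < i₃ ∧ ω i₃ < ω i₁ ∧ ω i₁ < ω i₂) :
    ∃ i₁ i₂ i₃ i₄ : ℤ, i₁ < i₂ ∧ i₂ < i₃ ∧ i₃ < i₄ ∧
      ω i₁ < ω i₄ ∧ ω i₄ < ω i₂ ∧ ω i₂ < ω i₃ :=
  contains_231_imp_contains_1342_general n hn ω hshift h231
end

section
/- Suppose ω ∈ S̃_n avoids the pattern 231, and let α ∈ {1, …, n} be an index where ω attains the maximum of ω(1), …, ω(n). Then ω(α) ≤ n + α − 1. -/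
/-!
Suppose `ω α ≥ n + α`. The window `α + 1, …, α + n` carries `n` distinct values with sum
`n (n + 1) / 2 + n α`, the last of which is `ω (α + n) = ω α + n`. If the other `n - 1` values were
all at least `ω α - n`, being distinct they would push the sum above that value. So some `ω i` with
`α < i < α + n` lies below `ω (α - n) = ω α - n < ω α`, and `α - n < α < i` is an occurrence of 231.
-/

open Finset

theorem Finset.card_mul_two_mul_add_card_sub_one_le_two_mul_sum (s : Finset ℤ) (B : ℤ)
    (hB : ∀ x ∈ s, B ≤ x) : (#s : ℤ) * (2 * B + #s - 1) ≤ 2 * ∑ x ∈ s, x := by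
  induction s using Finset.induction_on_max with
  | empty => simp
  | insert a s has ih =>
    have hsa : s ⊆ Ico B a := fun x hx ↦ mem_Ico.2 ⟨hB x (mem_insert_of_mem hx), has x hx⟩
    have hcard : (#s : ℤ) ≤ a - B := by
      have hBa := hB a (mem_insert_self a s)
      have := card_le_card hsa
      rw [Int.card_Ico] at this
      omega
    have ha : a ∉ s := fun h ↦ (has a h).false
    rw [card_insert_of_notMem ha, sum_insert ha]
    push_cast
    linear_combination ih (fun x hx ↦ hB x (mem_insert_of_mem hx)) + 2 * hcard

theorem sum_window_of_map_add_eq {f : ℤ → ℤ} {n : ℕ} (hf : ∀ i, f (i + n) = f i + n) (a : ℤ) :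
    ∑ i ∈ Icc (a + 1) (a + n), f i = ∑ i ∈ Icc 1 (n : ℤ), f i + n * a := by
  obtain rfl | hn := n.eq_zero_or_pos
  · simp
  set g : ℤ → ℤ := fun a ↦ ∑ i ∈ Icc (a + 1) (a + n), f i
  have step (a : ℤ) : g (a + 1) = g a + n := by
    simp only [g]
    rw [← insert_Icc_add_one_left_eq_Icc (by omega : a + 1 ≤ a + n), add_right_comm a 1 (n : ℤ),
      ← insert_Icc_right_eq_Icc_add_one (by omega : a + 1 + 1 ≤ a + n + 1),
      sum_insert (by simp), sum_insert (by simp), add_right_comm a (n : ℤ) 1, hf]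
    ring
  suffices g a = g 0 + n * a by simpa [g] using this
  induction a using Int.induction_on with
  | zero => simp
  | succ a ih => rw [step, ih]; ring
  | pred a ih =>
    have := step (-a - 1)
    rw [sub_add_cancel] at this
    linear_combination ih - this

theorem Finset.exists_lt_sub_two_mul_card_of_two_mul_sum_eq (s : Finset ℤ) {a x : ℤ} (hx : x ∈ s)
    (hsum : 2 * ∑ y ∈ s, y = #s * (#s + 1 + 2 * a)) (hxa : 2 * #s + a ≤ x) :
    ∃ y ∈ s, y < x - 2 * #s := by
  by_contra! h
  have hlow := (s.erase x).card_mul_two_mul_add_card_sub_one_le_two_mul_sum (x - 2 * #s)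
    fun y hy ↦ h y (mem_of_mem_erase hy)
  have hs : 1 ≤ #s := card_pos.2 ⟨x, hx⟩
  rw [card_erase_of_mem hx, Nat.cast_sub hs, Nat.cast_one] at hlow
  rw [← add_sum_erase s (fun y ↦ y) hx] at hsum
  nlinarith [mul_le_mul_of_nonneg_left hxa (Int.natCast_nonneg #s)]

theorem avoids_231_max_bound_general (n : ℕ) (ω : ℤ → ℤ)
    (hbij : Function.Bijective ω)
    (hshift : ∀ i : ℤ, ω (i + n) = ω i + n)
    (hsum : ∑ i ∈ Finset.Icc (1 : ℤ) (n : ℤ), ω i = ((n + 1).choose 2 : ℤ))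
    (havoid : ¬ ∃ i₁ i₂ i₃ : ℤ, i₁ < i₂ ∧ i₂ < i₃ ∧ ω i₃ < ω i₁ ∧ ω i₁ < ω i₂)
    (α : ℤ) (hα : α ∈ Finset.Icc (1 : ℤ) (n : ℤ)) :
    ω α ≤ (n : ℤ) + α - 1 := by
  obtain ⟨hα₁, hαn⟩ := mem_Icc.1 hα
  by_contra! hlarge
  have hwindow : #((Icc (α + 1) (α + n)).image ω) = n := by
    rw [card_image_of_injective _ hbij.injective, Int.card_Icc]
    omega
  have hchoose : 2 * (((n + 1).choose 2 : ℕ) : ℤ) = (n + 1) * n := by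
    have := Nat.add_one_mul_choose_eq n 1
    rw [Nat.choose_one_right] at this
    exact_mod_cast (by linarith : 2 * (n + 1).choose 2 = (n + 1) * n)
  obtain ⟨_, hy, hsmall⟩ := exists_lt_sub_two_mul_card_of_two_mul_sum_eq _ (a := α)
    (mem_image_of_mem ω (right_mem_Icc.2 (by omega : α + 1 ≤ α + n)))
    (by
      rw [hwindow, sum_image hbij.injective.injOn, sum_window_of_map_add_eq hshift, hsum]
      linear_combination hchoose)
    (by rw [hwindow, hshift]; omega)
  obtain ⟨i, hi, rfl⟩ := mem_image.1 hy
  rw [mem_Icc] at hi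
  rw [hwindow, hshift] at hsmall
  have hprev : ω (α - n) + n = ω α := by simpa using (hshift (α - n)).symm
  exact havoid ⟨α - n, α, i, by omega, by omega, by omega, by omega⟩

theorem avoids_231_max_bound (n : ℕ) (hn : 2 ≤ n) (ω : ℤ → ℤ)
    (hbij : Function.Bijective ω)
    (hshift : ∀ i : ℤ, ω (i + n) = ω i + n)
    (hsum : ∑ i ∈ Finset.Icc (1 : ℤ) (n : ℤ), ω i = ((n + 1).choose 2 : ℤ))
    (havoid : ¬ ∃ i₁ i₂ i₃ : ℤ, i₁ < i₂ ∧ i₂ < i₃ ∧ ω i₃ < ω i₁ ∧ ω i₁ < ω i₂)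
    (α : ℤ) (hα : α ∈ Finset.Icc (1 : ℤ) (n : ℤ))
    (hmax : ∀ i ∈ Finset.Icc (1 : ℤ) (n : ℤ), ω i ≤ ω α) :
    ω α ≤ (n : ℤ) + α - 1 :=
  avoids_231_max_bound_general n ω hbij hshift hsum havoid α hα
end

section
/- Let p ∈ S_m avoid 321 and be decomposable: there exists 1 ≤ j ≤ m−1 with {p₁,…,p_j} = {1,…,j}, giving q = p₁⋯p_j ∈ S_j and r viewed in S_{m−j}. If an affine permutation ω ∈ S̃_n contains both q and r, then ω contains p. -/
/-!
Take occurrences `g` of `q` and `f` of `r` in `ω`. Since `ω (i + n) = ω i + n`, translating `f` by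
a multiple `k n` of the period is again an occurrence of `r`; for `k` large it lies entirely to
the right of and above `g`. As `p` is the direct sum of `q` and `r`, concatenating `g` with the
translated `f` is an occurrence of `p`.
-/

/-- `ω` contains the pattern `p`: some increasing sequence of indices has values in
the same relative order as `p`. -/
def ContainsPattern {m : ℕ} (ω : ℤ → ℤ) (p : Equiv.Perm (Fin m)) : Prop :=
  ∃ f : Fin m → ℤ, StrictMono f ∧ ∀ a b : Fin m, p a < p b ↔ ω (f a) < ω (f b)

open Filter

lemma Fin.strictMono_append {α : Type*} [Preorder α] {j l : ℕ} {g : Fin j → α} {f : Fin l → α}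
    (hg : StrictMono g) (hf : StrictMono f) (hgf : ∀ a b, g a < f b) :
    StrictMono (Fin.append g f) := by
  intro x y hxy
  simp only [Fin.lt_def] at hxy
  cases x using Fin.addCases with
  | left a =>
    cases y using Fin.addCases with
    | left a' => simpa using hg (Fin.lt_def.2 (by simpa using hxy))
    | right b => simpa using hgf a b
  | right b =>
    cases y using Fin.addCases with
    | left a' => simp only [Fin.val_castAdd, Fin.val_natAdd] at hxy; omega
    | right b' => simpa using hf (Fin.lt_def.2 (by simpa using hxy))

lemma containsPattern_of_append {j l : ℕ} {ω : ℤ → ℤ} {p : Equiv.Perm (Fin (j + l))}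
    {q : Equiv.Perm (Fin j)} {r : Equiv.Perm (Fin l)}
    (hq : ∀ a : Fin j, (p (Fin.castAdd l a) : ℕ) = (q a : ℕ))
    (hr : ∀ b : Fin l, (p (Fin.natAdd j b) : ℕ) = j + (r b : ℕ))
    {g : Fin j → ℤ} {f : Fin l → ℤ}
    (hg : StrictMono g) (hgq : ∀ a a', q a < q a' ↔ ω (g a) < ω (g a'))
    (hf : StrictMono f) (hfr : ∀ b b', r b < r b' ↔ ω (f b) < ω (f b'))
    (hpos : ∀ a b, g a < f b) (hval : ∀ a b, ω (g a) < ω (f b)) :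
    ContainsPattern ω p := by
  refine ⟨Fin.append g f, Fin.strictMono_append hg hf hpos, fun x y => ?_⟩
  cases x using Fin.addCases with
  | left a =>
    cases y using Fin.addCases with
    | left a' => simp only [Fin.append_left, ← hgq, Fin.lt_def, hq]
    | right b =>
      have := (q a).isLt
      simp only [Fin.append_left, Fin.append_right, hval, iff_true, Fin.lt_def, hq, hr]
      omega
  | right b =>
    cases y using Fin.addCases with
    | left a =>
      have := (q a).isLt
      simp only [Fin.append_left, Fin.append_right, (hval a b).not_gt, iff_false, Fin.lt_def,
        hq, hr]
      omega
    | right b' => simp only [Fin.append_right, ← hfr, Fin.lt_def, hr, add_lt_add_iff_left]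

lemma eventually_forall_lt_add_mul {ι κ : Type*} [Finite ι] [Finite κ] (g : ι → ℤ) (f : κ → ℤ)
    {d : ℤ} (hd : 0 < d) : ∀ᶠ k : ℕ in atTop, ∀ a b, g a < f b + k * d := by
  obtain ⟨G, hG⟩ := (Set.finite_range g).bddAbove
  obtain ⟨F, hF⟩ := (Set.finite_range f).bddBelow
  filter_upwards [eventually_gt_atTop (G - F).toNat] with k hk a b
  have hga := hG (Set.mem_range_self a)
  have hfb := hF (Set.mem_range_self b)
  have hkd : (k : ℤ) ≤ k * d := le_mul_of_one_le_right (by positivity) hd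
  omega

theorem decomposable_pattern_containment_general (n j l : ℕ) (hn : 2 ≤ n)
    (p : Equiv.Perm (Fin (j + l))) (q : Equiv.Perm (Fin j)) (r : Equiv.Perm (Fin l))
    (hq : ∀ a : Fin j, (p (Fin.castAdd l a) : ℕ) = (q a : ℕ))
    (hr : ∀ b : Fin l, (p (Fin.natAdd j b) : ℕ) = j + (r b : ℕ))
    (ω : ℤ → ℤ)
    (hshift : ∀ i : ℤ, ω (i + n) = ω i + n)
    (hcq : ContainsPattern ω q) (hcr : ContainsPattern ω r) :
    ContainsPattern ω p := by
  obtain ⟨g, hg, hgq⟩ := hcq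
  obtain ⟨f, hf, hfr⟩ := hcr
  have hn₀ : (0 : ℤ) < n := by omega
  have hω (k : ℕ) (i : ℤ) : ω (i + k * n) = ω i + k * n := by
    simpa using AddConstMapClass.map_add_nsmul (⟨ω, hshift⟩ : AddConstMap ℤ ℤ (n : ℤ) (n : ℤ)) i k
  obtain ⟨k, hpos, hval⟩ := ((eventually_forall_lt_add_mul g f hn₀).and
    (eventually_forall_lt_add_mul (ω ∘ g) (ω ∘ f) hn₀)).exists
  exact containsPattern_of_append hq hr (f := fun b => f b + k * n) hg hgq
    (hf.add_const _) (fun b b' => by simp only [hω, add_lt_add_iff_right, hfr])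
    hpos (fun a b => by simpa [hω] using hval a b)

theorem decomposable_pattern_containment (n j l : ℕ) (hn : 2 ≤ n)
    (hj : 1 ≤ j) (hl : 1 ≤ l)
    (p : Equiv.Perm (Fin (j + l))) (q : Equiv.Perm (Fin j)) (r : Equiv.Perm (Fin l))
    (h321 : ¬ ∃ a b c : Fin (j + l), a < b ∧ b < c ∧ p c < p b ∧ p b < p a)
    (hq : ∀ a : Fin j, (p (Fin.castAdd l a) : ℕ) = (q a : ℕ))
    (hr : ∀ b : Fin l, (p (Fin.natAdd j b) : ℕ) = j + (r b : ℕ))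
    (ω : ℤ → ℤ) (hbij : Function.Bijective ω)
    (hshift : ∀ i : ℤ, ω (i + n) = ω i + n)
    (hsum : ∑ i ∈ Finset.Icc (1 : ℤ) (n : ℤ), ω i = ((n + 1).choose 2 : ℤ))
    (hcq : ContainsPattern ω q) (hcr : ContainsPattern ω r) :
    ContainsPattern ω p :=
  decomposable_pattern_containment_general n j l hn p q r hq hr ω hshift hcq hcr
end

section
/- For any ω ∈ S̃_n, the Coxeter length satisfies ℓ(ω) = inv(ω₁,…,ω_n) + ∑_{1 ≤ i < j ≤ n} ⌊|ω_j − ω_i| / n⌋, where inv counts the pairs i < j in {1,…,n} with ω_i > ω_j. -/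
/-- The Coxeter length of an affine permutation: the number of affine inversions. -/
noncomputable def affineLength (n : ℕ) (ω : ℤ → ℤ) : ℕ :=
  Set.ncard {q : ℤ × ℤ | 1 ≤ q.1 ∧ q.1 ≤ (n : ℤ) ∧ q.1 < q.2 ∧ ω q.2 < ω q.1}

/-!
Every `j > i` is uniquely `r + k * n` with `r ∈ [1, n]`, and `ω (r + k * n) = ω r + k * n`.
So the affine inversions `(i, j)` with `i ≤ n` are counted, for each pair `(i, r)` of window
positions, by the integers `k` in an interval of length about `(ω i - ω r) / n`. Pairing `(i, r)`
with `(r, i)` for `i < r`, the two counts add up to `[ω r < ω i] + ⌊|ω r - ω i| / n⌋`; this uses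
that `n` does not divide `ω i - ω r`, which is where injectivity of `ω` enters.
-/

open Finset Function

theorem Finset.sum_product_self_eq_sum_lt_add_swap {α M : Type*} [LinearOrder α]
    [AddCommMonoid M] (s : Finset α) (f : α × α → M) (hdiag : ∀ a ∈ s, f (a, a) = 0) :
    ∑ q ∈ s ×ˢ s, f q = ∑ q ∈ s ×ˢ s with q.1 < q.2, (f q + f q.swap) := by
  have hgt : ∑ q ∈ s ×ˢ s with ¬ q.1 < q.2, f q = ∑ q ∈ s ×ˢ s with q.1 < q.2, f q.swap := by
    rw [← sum_filter_of_ne (p := fun q : α × α => q.1 ≠ q.2), filter_filter]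
    · refine sum_nbij' Prod.swap Prod.swap ?_ ?_ (by simp) (by simp) (by simp)
      all_goals
        rintro ⟨a, b⟩ h
        simp only [mem_filter, mem_product, Prod.swap_prod_mk] at h ⊢
        grind
    · rintro ⟨a, b⟩ h hf (rfl : a = b)
      exact hf (hdiag a (mem_product.1 (mem_filter.1 h).1).1)
  rw [sum_add_distrib, ← hgt, sum_filter_add_sum_filter_not]

theorem Int.sub_one_ediv_of_not_dvd {n d : ℤ} (hn : 0 < n) (hd : ¬ n ∣ d) :
    (d - 1) / n = d / n := by
  refine le_antisymm (Int.ediv_le_ediv hn (by omega)) ?_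
  rw [Int.le_ediv_iff_mul_le hn]
  have hle := Int.ediv_mul_le d hn.ne'
  have hne : d / n * n ≠ d := fun h => hd ⟨d / n, by linarith⟩
  omega

theorem Int.toNat_sub_one_ediv_add_toNat_neg_sub_one_ediv {n d : ℤ} (hn : 0 < n)
    (hd : ¬ n ∣ d) :
    (((d - 1) / n + 1).toNat : ℤ) + ((-d - 1) / n).toNat = (if 0 < d then 1 else 0) + |d| / n := by
  rcases lt_trichotomy d 0 with hneg | rfl | hpos
  · have hnd : ¬ n ∣ -d := (Int.dvd_neg).not.mpr hd
    have hle : (d - 1) / n + 1 ≤ 0 := by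
      linarith [Int.ediv_neg_of_neg_of_pos (by omega : d - 1 < 0) hn]
    rw [Int.toNat_of_nonpos hle, Int.sub_one_ediv_of_not_dvd hn hnd,
      Int.toNat_of_nonneg (Int.ediv_nonneg (by omega) hn.le), if_neg (by omega), abs_of_neg hneg]
    simp
  · exact absurd (dvd_zero n) hd
  · have hlt : (-d - 1) / n < 0 := Int.ediv_neg_of_neg_of_pos (by omega) hn
    rw [Int.sub_one_ediv_of_not_dvd hn hd, Int.toNat_of_nonneg (by
        linarith [Int.ediv_nonneg hpos.le hn.le]), Int.toNat_of_nonpos hlt.le, if_pos hpos,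
      abs_of_pos hpos]
    push_cast
    ring

section AffinePermutation

variable {n : ℕ} {ω : ℤ → ℤ}

theorem Int.eq_of_mem_Icc_of_dvd_sub {a b : ℤ} (ha : a ∈ Icc (1 : ℤ) n)
    (hb : b ∈ Icc (1 : ℤ) n) (h : (n : ℤ) ∣ a - b) : a = b := by
  rw [mem_Icc] at ha hb
  exact sub_eq_zero.mp (Int.eq_zero_of_abs_lt_dvd h (by rw [abs_lt]; omega))

theorem Int.exists_mem_Icc_eq_add_mul (hn : 0 < n) (j : ℤ) :
    ∃ r ∈ Icc (1 : ℤ) n, ∃ k : ℤ, j = r + k * n := by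
  have hn' : (0 : ℤ) < n := by exact_mod_cast hn
  refine ⟨(j - 1) % n + 1, mem_Icc.2 ⟨?_, ?_⟩, (j - 1) / n, ?_⟩
  · linarith [Int.emod_nonneg (j - 1) hn'.ne']
  · linarith [Int.emod_lt_of_pos (j - 1) hn']
  · linarith [Int.emod_add_mul_ediv (j - 1) n]

theorem map_add_mul_of_map_add (hshift : ∀ i : ℤ, ω (i + n) = ω i + n) (i k : ℤ) :
    ω (i + k * n) = ω i + k * n := by
  have hper : Periodic (fun i => ω i - i) (n : ℤ) := fun i => by simp only [hshift]; ring
  have := hper.int_mul k i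
  simp only [Int.cast_id] at this
  linarith

theorem not_dvd_sub_of_ne (hinj : Injective ω) (hshift : ∀ i : ℤ, ω (i + n) = ω i + n)
    {i r : ℤ} (hi : i ∈ Icc (1 : ℤ) n) (hr : r ∈ Icc (1 : ℤ) n) (hne : i ≠ r) :
    ¬ (n : ℤ) ∣ ω i - ω r := by
  rintro ⟨k, hk⟩
  have hik : i = r + k * n := hinj (by rw [map_add_mul_of_map_add hshift]; linarith)
  exact hne (Int.eq_of_mem_Icc_of_dvd_sub hi hr ⟨k, by linarith⟩)

variable (n ω) in
noncomputable def inversionShifts (i r : ℤ) : Finset ℤ :=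
  Icc (if i < r then 0 else 1) ((ω i - ω r - 1) / n)

theorem lt_add_mul_iff_of_mem_Icc {i r k : ℤ} (hi : i ∈ Icc (1 : ℤ) n)
    (hr : r ∈ Icc (1 : ℤ) n) : i < r + k * n ↔ (if i < r then 0 else 1) ≤ k := by
  rw [mem_Icc] at hi hr
  rcases lt_trichotomy k 0 with hk | rfl | hk
  · have : k * n ≤ -n := by nlinarith
    split_ifs <;> constructor <;> intro <;> omega
  · split_ifs <;> constructor <;> intro <;> omega
  · have : (n : ℤ) ≤ k * n := by nlinarith
    split_ifs <;> constructor <;> intro <;> omega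

theorem mem_inversionShifts (hn : 0 < n) (hshift : ∀ i : ℤ, ω (i + n) = ω i + n)
    {i r k : ℤ} (hi : i ∈ Icc (1 : ℤ) n) (hr : r ∈ Icc (1 : ℤ) n) :
    k ∈ inversionShifts n ω i r ↔ i < r + k * n ∧ ω (r + k * n) < ω i := by
  rw [inversionShifts, mem_Icc, lt_add_mul_iff_of_mem_Icc hi hr, map_add_mul_of_map_add hshift,
    Int.le_ediv_iff_mul_le (by exact_mod_cast hn)]
  exact and_congr_right' (by omega)

theorem card_inversionShifts (i r : ℤ) :
    (#(inversionShifts n ω i r) : ℤ) =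
      ((ω i - ω r - 1) / n + 1 - if i < r then 0 else 1).toNat := by
  rw [inversionShifts, Int.card_Icc]

theorem inversionShifts_self (hn : 0 < n) (i : ℤ) : inversionShifts n ω i i = ∅ := by
  refine Icc_eq_empty_of_lt ?_
  rw [sub_self, if_neg (lt_irrefl i)]
  have hn' : (0 : ℤ) < n := by exact_mod_cast hn
  linarith [Int.ediv_neg_of_neg_of_pos (by norm_num : (0 : ℤ) - 1 < 0) hn']

theorem card_inversionShifts_add_card_inversionShifts_swap (hn : 0 < n) {i r : ℤ} (hir : i < r)
    (hnd : ¬ (n : ℤ) ∣ ω i - ω r) :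
    (#(inversionShifts n ω i r) : ℤ) + #(inversionShifts n ω r i) =
      (if ω r < ω i then 1 else 0) + |ω r - ω i| / n := by
  have key := Int.toNat_sub_one_ediv_add_toNat_neg_sub_one_ediv (by exact_mod_cast hn) hnd
  simp only [sub_pos, neg_sub] at key
  rwa [card_inversionShifts, card_inversionShifts, if_pos hir, if_neg hir.not_gt, sub_zero,
    add_sub_cancel_right, abs_sub_comm]

theorem affineLength_eq_sum_card_inversionShifts (hn : 0 < n)
    (hshift : ∀ i : ℤ, ω (i + n) = ω i + n) :
    affineLength n ω =
      ∑ q ∈ Icc (1 : ℤ) n ×ˢ Icc (1 : ℤ) n, #(inversionShifts n ω q.1 q.2) := by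
  set B := Icc (1 : ℤ) n
  have hset : {q : ℤ × ℤ | 1 ≤ q.1 ∧ q.1 ≤ (n : ℤ) ∧ q.1 < q.2 ∧ ω q.2 < ω q.1} =
      ↑(((B ×ˢ B).sigma fun q => inversionShifts n ω q.1 q.2).image
        fun p => (p.1.1, p.1.2 + p.2 * (n : ℤ))) := by
    ext ⟨i, j⟩
    simp only [Set.mem_ofPred_eq, coe_image, Set.mem_image, mem_coe, mem_sigma, mem_product,
      Sigma.exists, Prod.exists, Prod.mk.injEq]
    constructor
    · rintro ⟨hi1, hi2, hij, hinv⟩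
      have hi : i ∈ B := mem_Icc.2 ⟨hi1, hi2⟩
      obtain ⟨r, hr, k, rfl⟩ := Int.exists_mem_Icc_eq_add_mul hn j
      exact ⟨i, r, k, ⟨⟨hi, hr⟩, (mem_inversionShifts hn hshift hi hr).2 ⟨hij, hinv⟩⟩, rfl, rfl⟩
    · rintro ⟨i, r, k, ⟨⟨hi, hr⟩, hk⟩, rfl, rfl⟩
      exact ⟨(mem_Icc.1 hi).1, (mem_Icc.1 hi).2, (mem_inversionShifts hn hshift hi hr).1 hk⟩
  rw [affineLength, hset, Set.ncard_coe_finset, card_image_of_injOn, card_sigma]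
  rintro ⟨⟨i, r⟩, k⟩ hp ⟨⟨i', r'⟩, k'⟩ hp' h
  simp only [coe_sigma, Set.mem_sigma_iff, coe_product, Set.mem_prod, mem_coe,
    Prod.mk.injEq] at hp hp' h
  obtain ⟨rfl, hj⟩ := h
  obtain rfl : r = r' := Int.eq_of_mem_Icc_of_dvd_sub hp.1.2 hp'.1.2 ⟨k' - k, by linarith⟩
  have hn' : (n : ℤ) ≠ 0 := by exact_mod_cast hn.ne'
  obtain rfl : k = k' := mul_right_cancel₀ hn' (by linarith)
  rfl

end AffinePermutation

theorem affine_length_formula_general (n : ℕ) (hn : 2 ≤ n) (ω : ℤ → ℤ)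
    (hbij : Function.Bijective ω)
    (hshift : ∀ i : ℤ, ω (i + n) = ω i + n) :
    (affineLength n ω : ℤ) =
      (((Finset.Icc (1 : ℤ) (n : ℤ) ×ˢ Finset.Icc (1 : ℤ) (n : ℤ)).filter
        (fun q => q.1 < q.2 ∧ ω q.2 < ω q.1)).card : ℤ) +
      ∑ q ∈ (Finset.Icc (1 : ℤ) (n : ℤ) ×ˢ Finset.Icc (1 : ℤ) (n : ℤ)).filter
        (fun q => q.1 < q.2), |ω q.2 - ω q.1| / (n : ℤ) := by
  have hn0 : 0 < n := by omega
  rw [affineLength_eq_sum_card_inversionShifts hn0 hshift,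
    sum_product_self_eq_sum_lt_add_swap _ _ fun i _ => by rw [inversionShifts_self hn0, card_empty],
    ← filter_filter, card_filter]
  push_cast
  rw [← sum_add_distrib]
  refine sum_congr rfl fun q hq => ?_
  obtain ⟨hmem, hlt⟩ := mem_filter.1 hq
  exact card_inversionShifts_add_card_inversionShifts_swap hn0 hlt
    (not_dvd_sub_of_ne hbij.injective hshift (mem_product.1 hmem).1 (mem_product.1 hmem).2 hlt.ne)

theorem affine_length_formula (n : ℕ) (hn : 2 ≤ n) (ω : ℤ → ℤ)
    (hbij : Function.Bijective ω)
    (hshift : ∀ i : ℤ, ω (i + n) = ω i + n)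
    (hsum : ∑ i ∈ Finset.Icc (1 : ℤ) (n : ℤ), ω i = ((n + 1).choose 2 : ℤ)) :
    (affineLength n ω : ℤ) =
      (((Finset.Icc (1 : ℤ) (n : ℤ) ×ˢ Finset.Icc (1 : ℤ) (n : ℤ)).filter
        (fun q => q.1 < q.2 ∧ ω q.2 < ω q.1)).card : ℤ) +
      ∑ q ∈ (Finset.Icc (1 : ℤ) (n : ℤ) ×ˢ Finset.Icc (1 : ℤ) (n : ℤ)).filter
        (fun q => q.1 < q.2), |ω q.2 - ω q.1| / (n : ℤ) :=
  affine_length_formula_general n hn ω hbij hshift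
end
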